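/- Let f_x(θ) = log|e^{iθ} - e^{ix}| for fixed real x. Then the Fourier coefficients of f_x satisfy (f_x)^_k = -e^{-ikx}/(2|k|) for every nonzero integer k, and (f_x)^_0 = 0, where ĝ_k = (1/2π)∫_0^{2π} g(θ) e^{-ikθ} dθ. -/

import Mathlib

set_option maxHeartbeats 1600000

open Complex Real MeasureTheory intervalIntegral

section helpers

open Set Filter


lemma intInt_log01 : IntervalIntegrable Real.log volume 0 1 := by
  rw [intervalIntegrable_iff_integrableOn_Ioc_of_le zero_le_one]
  have h : IntegrableOn (fun t : ℝ => -Real.log t) (Set.Ioc 0 1) volume := by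
    apply intervalIntegral.integrableOn_deriv_of_nonneg
      (g := fun t : ℝ => t - t * Real.log t)
    · exact (continuous_id.sub Real.continuous_mul_log).continuousOn
    · intro t ht
      have h1 : HasDerivAt (fun t : ℝ => t - t * Real.log t) (1 - (Real.log t + 1)) t :=
        (hasDerivAt_id t).sub (Real.hasDerivAt_mul_log ht.1.ne')
      convert h1 using 1
      ring
    · intro t ht
      simp only [neg_nonneg]
      exact Real.log_nonpos ht.1.le ht.2.le
  refine MeasureTheory.IntegrableOn.congr_fun h.neg (fun t ht => ?_) measurableSet_Ioc
  simp

lemma intInt_logabs_half : IntervalIntegrable (fun t => Real.log |t|) volume (-(π/2)) (π/2) := by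
  have l2 : IntervalIntegrable Real.log volume 1 (π/2) := by
    apply intervalIntegrable_log
    intro h
    rw [Set.mem_uIcc] at h
    have := Real.pi_gt_three
    rcases h with ⟨h1, _⟩ | ⟨_, h2⟩ <;> linarith
  have l3 : IntervalIntegrable Real.log volume 0 (π/2) := intInt_log01.trans l2
  have l4 : IntervalIntegrable (fun t : ℝ => Real.log |t|) volume 0 (π/2) := by
    have hle : (0:ℝ) ≤ π/2 := by positivity
    rw [intervalIntegrable_iff_integrableOn_Ioc_of_le hle] at l3 ⊢
    exact l3.congr_fun (fun t ht => by rw [abs_of_pos ht.1]) measurableSet_Ioc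
  have l5 : IntervalIntegrable (fun t : ℝ => Real.log |t|) volume (-0 : ℝ) (-(π/2)) := by
    have l6 := (IntervalIntegrable.iff_comp_neg (f := fun t : ℝ => Real.log |t|) (a := 0) (b := π/2) (by simp)).mp l4
    apply l6.congr
    intro t _
    simp [abs_neg]
  rw [neg_zero] at l5
  exact l5.symm.trans l4

lemma intInt_logsin_half :
    IntervalIntegrable (fun t => Real.log |Real.sin t|) volume (-(π/2)) (π/2) := by
  have hle : -(π/2) ≤ π/2 := by linarith [Real.pi_pos]
  rw [intervalIntegrable_iff_integrableOn_Ioc_of_le hle]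
  have labs := intInt_logabs_half.abs
  rw [intervalIntegrable_iff_integrableOn_Ioc_of_le hle] at labs
  have hb : IntegrableOn (fun t : ℝ => Real.log (π/2) + _root_.abs (Real.log |t|))
      (Set.Ioc (-(π/2)) (π/2)) volume :=
    (integrableOn_const measure_Ioc_lt_top.ne).add labs
  apply MeasureTheory.Integrable.mono' hb
  · exact ((Real.measurable_log.comp (continuous_sin.abs.measurable)).aestronglyMeasurable)
  · filter_upwards [MeasureTheory.ae_restrict_mem measurableSet_Ioc] with t ht
    rcases eq_or_ne t 0 with rfl | ht0
    · simp only [Real.sin_zero, abs_zero, Real.log_zero, norm_zero, add_zero]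
      exact Real.log_nonneg (by nlinarith [Real.pi_gt_three])
    · have habs : |t| ≤ π/2 := abs_le.2 ⟨ht.1.le, ht.2⟩
      have hlow : 2/π * |t| ≤ |Real.sin t| := Real.mul_abs_le_abs_sin habs
      have ht0' : 0 < |t| := abs_pos.2 ht0
      have h2pi : (0:ℝ) < 2/π := by positivity
      have hlog1 : Real.log (2/π * |t|) ≤ Real.log |Real.sin t| :=
        Real.log_le_log (by positivity) hlow
      have hup : Real.log |Real.sin t| ≤ 0 := Real.log_nonpos (abs_nonneg _) (Real.abs_sin_le_one t)
      rw [Real.log_mul h2pi.ne' ht0'.ne', Real.log_div two_ne_zero Real.pi_ne_zero] at hlog1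
      rw [Real.norm_eq_abs, abs_of_nonpos hup]
      have hπ2 : Real.log (π/2) = Real.log π - Real.log 2 := Real.log_div Real.pi_ne_zero two_ne_zero
      have := neg_abs_le (Real.log |t|)
      linarith [le_abs_self (Real.log |t|)]

lemma intInt_logsin_shift (k : ℤ) :
    IntervalIntegrable (fun t => Real.log |Real.sin t|) volume
      ((k:ℝ)*π - π/2) ((k:ℝ)*π + π/2) := by
  have h := intInt_logsin_half.comp_sub_right ((k:ℝ)*π)
  have he : (fun t : ℝ => Real.log |Real.sin (t - (k:ℝ)*π)|)
      = fun t : ℝ => Real.log |Real.sin t| := by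
    funext t
    rw [Real.sin_sub]
    simp [Real.sin_int_mul_pi, abs_mul, Real.abs_cos_int_mul_pi]
  rw [he] at h
  have ea : -(π/2) + (k:ℝ)*π = (k:ℝ)*π - π/2 := by ring
  have eb : π/2 + (k:ℝ)*π = (k:ℝ)*π + π/2 := by ring
  rwa [ea, eb] at h

lemma intInt_logsin_sym (n : ℕ) :
    IntervalIntegrable (fun t => Real.log |Real.sin t|) volume
      (-((n:ℝ)*π + π/2)) ((n:ℝ)*π + π/2) := by
  induction n with
  | zero => simpa using intInt_logsin_half
  | succ n ih =>
      have h1 := intInt_logsin_shift (-(n+1) : ℤ)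
      have h2 := intInt_logsin_shift ((n+1) : ℤ)
      have e1 : ((-(n+1) : ℤ) : ℝ)*π - π/2 = -(((n:ℝ)+1)*π + π/2) := by push_cast; ring
      have e2 : ((-(n+1) : ℤ) : ℝ)*π + π/2 = -((n:ℝ)*π + π/2) := by push_cast; ring
      have e3 : (((n+1) : ℤ) : ℝ)*π - π/2 = (n:ℝ)*π + π/2 := by push_cast; ring
      have e4 : (((n+1) : ℤ) : ℝ)*π + π/2 = ((n:ℝ)+1)*π + π/2 := by push_cast; ring
      rw [e1, e2] at h1
      rw [e3, e4] at h2
      push_cast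
      exact (h1.trans ih).trans h2

lemma intInt_logsin (a b : ℝ) :
    IntervalIntegrable (fun t => Real.log |Real.sin t|) volume a b := by
  obtain ⟨n, hn⟩ := exists_nat_ge ((max |a| |b|) / π)
  have hπ := Real.pi_pos
  have hn' : max |a| |b| ≤ (n:ℝ)*π := by
    rw [div_le_iff₀ hπ] at hn
    linarith
  apply (intInt_logsin_sym n).mono_set
  rw [Set.uIcc_subset_uIcc_iff_le]
  have hX : (0:ℝ) ≤ (n:ℝ)*π + π/2 := by positivity
  have haX : |a| ≤ (n:ℝ)*π + π/2 := by have := le_max_left |a| |b|; linarith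
  have hbX : |b| ≤ (n:ℝ)*π + π/2 := by have := le_max_right |a| |b|; linarith
  constructor
  · exact le_min ((min_le_left _ _).trans (by linarith [abs_le.1 haX]))
      ((min_le_left _ _).trans (by linarith [abs_le.1 hbX]))
  · exact max_le (((le_abs_self a).trans haX).trans (le_max_right _ _))
      (((le_abs_self b).trans hbX).trans (le_max_right _ _))

lemma integral_exp_int (m : ℤ) :
    (∫ θ in (0:ℝ)..(2*π), Complex.exp (m * Complex.I * θ)) =
      if m = 0 then ((2*π : ℝ) : ℂ) else 0 := by
  rcases eq_or_ne m 0 with rfl | hm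
  · simp
  · rw [if_neg hm]
    have hc : (m : ℂ) * Complex.I ≠ 0 := by
      simp [Complex.I_ne_zero, Complex.ext_iff]
      exact_mod_cast hm
    rw [integral_exp_mul_complex hc]
    have h1 : (m:ℂ) * Complex.I * ((2*π:ℝ):ℂ) = m * (2 * π * Complex.I) := by
      push_cast; ring
    rw [h1, Complex.exp_int_mul_two_pi_mul_I]
    simp

lemma abs_factor (x r θ : ℝ) :
    norm (Complex.exp (Complex.I * θ) - r * Complex.exp (Complex.I * x)) =
      norm (1 - r * Complex.exp (Complex.I * ((x : ℂ) - θ))) := by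
  have he : Complex.exp (Complex.I * θ) * Complex.exp (Complex.I * ((x:ℂ) - θ))
      = Complex.exp (Complex.I * x) := by
    rw [← Complex.exp_add]; congr 1; ring
  have hfac : Complex.exp (Complex.I * θ) - r * Complex.exp (Complex.I * x)
      = Complex.exp (Complex.I * θ) * (1 - r * Complex.exp (Complex.I * ((x:ℂ) - θ))) := by
    linear_combination (r:ℂ) * he
  rw [hfac, norm_mul]
  simp [Complex.norm_exp]

lemma coeff_r (x r : ℝ) (hr0 : 0 ≤ r) (hr1 : r < 1) (k : ℤ) :
    (∫ θ in (0:ℝ)..(2*π),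
        (Real.log (norm
          (Complex.exp (Complex.I * θ) - r * Complex.exp (Complex.I * x))) : ℂ)
          * Complex.exp (-Complex.I * k * θ))
      = if k = 0 then 0 else
          -(π:ℂ) * r ^ (k.natAbs) * Complex.exp (-Complex.I * k * x) / (k.natAbs : ℂ) := by
  have hπ := Real.pi_pos
  have hle : (0:ℝ) ≤ 2*π := by linarith
  set w : ℝ → ℂ := fun θ => (r:ℂ) * Complex.exp (Complex.I * ((x:ℂ) - θ)) with hw
  set wb : ℝ → ℂ := fun θ => (r:ℂ) * Complex.exp (-Complex.I * ((x:ℂ) - θ)) with hwb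
  set h : ℕ → ℝ → ℂ := fun n θ =>
    (-(1/2) : ℂ) * Complex.exp (-Complex.I * k * θ) * ((w θ)^n + (wb θ)^n) / n with hh
  have hwnorm : ∀ θ, ‖w θ‖ = r := by
    intro θ
    simp [hw, norm_mul, Complex.norm_exp, _root_.abs_of_nonneg hr0]
  have hwbnorm : ∀ θ, ‖wb θ‖ = r := by
    intro θ
    simp [hwb, norm_mul, Complex.norm_exp, _root_.abs_of_nonneg hr0]
  -- pointwise has-sum
  have key : ∀ θ : ℝ,
      (Real.log (norm
          (Complex.exp (Complex.I * θ) - r * Complex.exp (Complex.I * x))) : ℂ)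
        * Complex.exp (-Complex.I * k * θ) = ∑' n, h n θ := by
    intro θ
    have hwlt : ‖w θ‖ < 1 := by rw [hwnorm]; exact hr1
    have H1 : HasSum (fun n : ℕ => (w θ)^n / n) (-Complex.log (1 - w θ)) :=
      Complex.hasSum_taylorSeries_neg_log hwlt
    have H2 : HasSum (fun n : ℕ => (wb θ)^n / n)
        ((starRingEnd ℂ) (-Complex.log (1 - w θ))) := by
      have := H1.map (starRingEnd ℂ) Complex.continuous_conj
      have hconj : (starRingEnd ℂ) (w θ) = wb θ := by
        simp only [hw, hwb, map_mul, Complex.conj_ofReal, ← Complex.exp_conj]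
        congr 2
        simp [map_mul, map_sub, Complex.conj_I, Complex.conj_ofReal]
      have hc : ((starRingEnd ℂ) ∘ fun n : ℕ => (w θ)^n / n)
          = fun n : ℕ => (wb θ)^n / n := by
        funext n
        simp only [Function.comp_apply, map_div₀, map_pow, map_natCast, hconj]
      rwa [hc] at this
    have H3 := (H1.add H2).mul_left ((-(1/2) : ℂ) * Complex.exp (-Complex.I * k * θ))
    have hterm : (fun n : ℕ => (-(1/2) : ℂ) * Complex.exp (-Complex.I * k * θ)
        * ((w θ)^n / n + (wb θ)^n / n)) = fun n => h n θ := by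
      funext n
      simp only [hh]
      rw [← add_div, mul_div_assoc]
    rw [hterm] at H3
    have hsumval : (-(1/2) : ℂ) * Complex.exp (-Complex.I * k * θ)
        * (-Complex.log (1 - w θ) + (starRingEnd ℂ) (-Complex.log (1 - w θ)))
        = (Real.log (norm
          (Complex.exp (Complex.I * θ) - r * Complex.exp (Complex.I * x))) : ℂ)
          * Complex.exp (-Complex.I * k * θ) := by
      rw [abs_factor x r θ]
      have hre : ((Real.log (norm (1 - w θ)) : ℝ) : ℂ)
          = ((Complex.log (1 - w θ)).re : ℂ) := by
        rw [Complex.log_re]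
      rw [hre]
      have := Complex.add_conj (Complex.log (1 - w θ))
      rw [map_neg]
      push_cast at this
      linear_combination ((1/2) : ℂ) * Complex.exp (-Complex.I * k * θ) * this
    rw [hsumval] at H3
    exact H3.tsum_eq.symm
  have hcont : ∀ n : ℕ, Continuous (h n) := by
    intro n
    simp only [hh, hw, hwb]
    fun_prop
  have hint : ∀ n : ℕ, Integrable (h n) (volume.restrict (Set.Ioc (0:ℝ) (2*π))) := fun n =>
    (hcont n).integrableOn_Ioc
  have hE : ∀ θ : ℝ, ‖Complex.exp (-Complex.I * k * θ)‖ = 1 := by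
    intro θ
    rw [show (-Complex.I * (k:ℂ) * (θ:ℝ)) = ((-((k:ℝ) * θ) : ℝ) : ℂ) * Complex.I by
      push_cast; ring]
    rw [Complex.norm_exp_ofReal_mul_I]
  have hnorm : ∀ (n : ℕ) (θ : ℝ), ‖h n θ‖ ≤ r ^ n := by
    intro n θ
    rcases Nat.eq_zero_or_pos n with rfl | hn1
    · simp [hh]
    · have hS : ‖(w θ)^n + (wb θ)^n‖ ≤ 2 * r^n := by
        calc ‖(w θ)^n + (wb θ)^n‖ ≤ ‖(w θ)^n‖ + ‖(wb θ)^n‖ := norm_add_le _ _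
          _ = r^n + r^n := by rw [norm_pow, norm_pow, hwnorm, hwbnorm]
          _ = 2 * r^n := by ring
      have h1 : (1:ℝ) ≤ (n:ℝ) := by exact_mod_cast hn1
      have hrn : (0:ℝ) ≤ r^n := by positivity
      simp only [hh, norm_div, norm_mul, hE θ, Complex.norm_natCast]
      have hhalf : ‖(-(1/2) : ℂ)‖ = 1/2 := by norm_num
      rw [hhalf]
      calc 1/2 * 1 * ‖(w θ)^n + (wb θ)^n‖ / (n:ℝ)
          ≤ 1/2 * 1 * (2 * r^n) / 1 := by gcongr
        _ = r^n := by ring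
  have hIb : ∀ n : ℕ, (∫ θ in Set.Ioc (0:ℝ) (2*π), ‖h n θ‖) ≤ (2*π) * r^n := by
    intro n
    have hc : Integrable (fun _ : ℝ => r^n) (volume.restrict (Set.Ioc (0:ℝ) (2*π))) :=
      MeasureTheory.integrableOn_const measure_Ioc_lt_top.ne
    have := MeasureTheory.integral_mono ((hint n).norm) hc (fun θ => hnorm n θ)
    rwa [MeasureTheory.integral_const, measureReal_restrict_apply_univ, measureReal_def, Real.volume_Ioc,
      smul_eq_mul, ENNReal.toReal_ofReal (by linarith), sub_zero] at this
  have hsum : Summable (fun n => ∫ θ in Set.Ioc (0:ℝ) (2*π), ‖h n θ‖) :=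
    Summable.of_nonneg_of_le (fun n => integral_nonneg (fun θ => norm_nonneg _)) hIb
      ((summable_geometric_of_lt_one hr0 hr1).mul_left _)
  rw [intervalIntegral.integral_of_le hle,
    MeasureTheory.integral_congr_ae (Filter.EventuallyEq.of_eq (funext key)),
    ← MeasureTheory.integral_tsum_of_summable_integral_norm hint hsum]
  have hval : ∀ n : ℕ, (∫ θ in Set.Ioc (0:ℝ) (2*π), h n θ) =
      (-(1/2)/(n:ℂ) * ((r:ℂ)^n * Complex.exp (Complex.I * n * x))) *
        (if (-k - n : ℤ) = 0 then ((2*π : ℝ) : ℂ) else 0)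
      + (-(1/2)/(n:ℂ) * ((r:ℂ)^n * Complex.exp (-(Complex.I * n * x)))) *
        (if (n - k : ℤ) = 0 then ((2*π : ℝ) : ℂ) else 0) := by
    intro n
    rw [← intervalIntegral.integral_of_le hle]
    have hident : ∀ θ : ℝ, h n θ =
        (-(1/2)/(n:ℂ) * ((r:ℂ)^n * Complex.exp (Complex.I * n * x))) *
          Complex.exp (((-k - n : ℤ) : ℂ) * Complex.I * θ)
        + (-(1/2)/(n:ℂ) * ((r:ℂ)^n * Complex.exp (-(Complex.I * n * x)))) *
          Complex.exp (((n - k : ℤ) : ℂ) * Complex.I * θ) := by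
      intro θ
      simp only [hh, hw, hwb]
      rw [mul_pow, mul_pow, ← Complex.exp_nat_mul, ← Complex.exp_nat_mul]
      have f1 : Complex.exp (-Complex.I * k * θ) * Complex.exp ((n:ℂ) * (Complex.I * ((x:ℂ) - θ)))
          = Complex.exp (Complex.I * n * x) * Complex.exp (((-k - n : ℤ) : ℂ) * Complex.I * θ) := by
        rw [← Complex.exp_add, ← Complex.exp_add]; congr 1; push_cast; ring
      have f2 : Complex.exp (-Complex.I * k * θ) * Complex.exp ((n:ℂ) * (-Complex.I * ((x:ℂ) - θ)))
          = Complex.exp (-(Complex.I * n * x)) * Complex.exp (((n - k : ℤ) : ℂ) * Complex.I * θ) := by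
        rw [← Complex.exp_add, ← Complex.exp_add]; congr 1; push_cast; ring
      linear_combination (-(1/2) * (r:ℂ)^n / (n:ℂ)) * f1 + (-(1/2) * (r:ℂ)^n / (n:ℂ)) * f2
    simp only [hident]
    have hc1 : Continuous fun θ : ℝ => Complex.exp (((-k - n : ℤ) : ℂ) * Complex.I * θ) := by
      fun_prop
    have hc2 : Continuous fun θ : ℝ => Complex.exp (((n - k : ℤ) : ℂ) * Complex.I * θ) := by
      fun_prop
    rw [intervalIntegral.integral_add ((hc1.intervalIntegrable _ _).const_mul _)
        ((hc2.intervalIntegrable _ _).const_mul _),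
      intervalIntegral.integral_const_mul, intervalIntegral.integral_const_mul,
      integral_exp_int, integral_exp_int]
  rcases eq_or_ne k 0 with rfl | hk
  · rw [if_pos rfl]
    have hz : ∀ n : ℕ, (∫ θ in Set.Ioc (0:ℝ) (2*π), h n θ) = 0 := by
      intro n
      rw [hval n]
      rcases Nat.eq_zero_or_pos n with rfl | hn
      · norm_num
      · rw [if_neg (by omega), if_neg (by omega)]
        ring
    simp only [hz, tsum_zero]
  · rw [if_neg hk]
    have hside : ∀ n : ℕ, n ≠ k.natAbs → (∫ θ in Set.Ioc (0:ℝ) (2*π), h n θ) = 0 := by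
      intro n hn
      rw [hval n, if_neg (by omega), if_neg (by omega)]
      ring
    rw [tsum_eq_single k.natAbs hside, hval]
    have hnz : ((k.natAbs : ℕ) : ℂ) ≠ 0 := by
      simp only [ne_eq, Nat.cast_eq_zero]
      omega
    rcases hk.lt_or_gt with hkneg | hkpos
    · rw [if_pos (by omega), if_neg (by omega)]
      have hcast : ((k.natAbs : ℕ) : ℂ) = -(k : ℂ) := by
        have h' : ((k.natAbs : ℤ)) = -k := by omega
        rw [← Int.cast_natCast (R := ℂ), h', Int.cast_neg]
      rw [show Complex.I * ((k.natAbs : ℕ) : ℂ) * (x:ℂ) = -Complex.I * k * x by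
        rw [hcast]; ring]
      rw [hcast]
      push_cast
      ring
    · rw [if_neg (by omega), if_pos (by omega)]
      have hcast : ((k.natAbs : ℕ) : ℂ) = (k : ℂ) := by
        have h' : ((k.natAbs : ℤ)) = k := by omega
        rw [← Int.cast_natCast (R := ℂ), h']
      rw [show -(Complex.I * ((k.natAbs : ℕ) : ℂ) * (x:ℂ)) = -Complex.I * k * x by
        rw [hcast]; ring]
      rw [hcast]
      push_cast
      ring

end helpers

section helpers2
open Set Filter

lemma abs_lower (x r θ : ℝ) (hr : 1/2 ≤ r) :
    (1/2) * |Real.sin (θ - x)| ≤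
      norm (Complex.exp (Complex.I * θ) - r * Complex.exp (Complex.I * x)) := by
  rw [abs_factor]
  have him : (1 - (r:ℂ) * Complex.exp (Complex.I * ((x : ℂ) - θ))).im = -(r * Real.sin (x - θ)) := by
    have : Complex.I * ((x : ℂ) - θ) = ((x - θ : ℝ) : ℂ) * Complex.I := by push_cast; ring
    rw [this, Complex.sub_im, Complex.one_im, Complex.mul_im, Complex.ofReal_re,
      Complex.ofReal_im, Complex.exp_ofReal_mul_I_im]
    ring
  have h1 := Complex.abs_im_le_norm (1 - (r:ℂ) * Complex.exp (Complex.I * ((x : ℂ) - θ)))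
  rw [him] at h1
  have h2 : |(-(r * Real.sin (x - θ)))| = r * |Real.sin (θ - x)| := by
    rw [abs_neg, abs_mul, _root_.abs_of_nonneg (by linarith : (0:ℝ) ≤ r)]
    rw [show x - θ = -(θ - x) by ring, Real.sin_neg, abs_neg]
  rw [h2] at h1
  nlinarith [abs_nonneg (Real.sin (θ - x))]

lemma abs_upper (x r θ : ℝ) (hr0 : 0 ≤ r) (hr1 : r ≤ 1) :
    norm (Complex.exp (Complex.I * θ) - r * Complex.exp (Complex.I * x)) ≤ 2 := by
  rw [abs_factor]
  have h := norm_sub_le (1:ℂ) ((r:ℂ) * Complex.exp (Complex.I * ((x : ℂ) - θ)))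
  rw [norm_one, norm_mul] at h
  have he : norm (Complex.exp (Complex.I * ((x : ℂ) - θ))) = 1 := by
    rw [show Complex.I * ((x : ℂ) - θ) = ((x - θ : ℝ) : ℂ) * Complex.I by push_cast; ring]
    exact Complex.norm_exp_ofReal_mul_I _
  rw [he, mul_one, Complex.norm_real, Real.norm_eq_abs, _root_.abs_of_nonneg hr0] at h
  linarith

lemma log_bound (x r θ : ℝ) (hr : 1/2 ≤ r) (hr1 : r ≤ 1) (hs : Real.sin (θ - x) ≠ 0) :
    |Real.log (norm
        (Complex.exp (Complex.I * θ) - r * Complex.exp (Complex.I * x)))| ≤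
      Real.log 2 + _root_.abs (Real.log |Real.sin (θ - x)|) := by
  set A := norm (Complex.exp (Complex.I * θ) - r * Complex.exp (Complex.I * x)) with hA
  have hs' : 0 < |Real.sin (θ - x)| := abs_pos.2 hs
  have hlow := abs_lower x r θ hr
  have hup := abs_upper x r θ (by linarith) hr1
  have hA0 : 0 < A := lt_of_lt_of_le (by positivity) hlow
  have hlog1 : Real.log A ≤ Real.log 2 := Real.log_le_log hA0 hup
  have hlog2 : Real.log ((1/2) * |Real.sin (θ - x)|) ≤ Real.log A :=
    Real.log_le_log (by positivity) hlow
  rw [Real.log_mul (by norm_num) hs'.ne'] at hlog2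
  have hhalf : Real.log (1/2) = -Real.log 2 := by
    rw [one_div, Real.log_inv]
  rw [hhalf] at hlog2
  rw [abs_le]
  constructor
  · have := neg_abs_le (Real.log |Real.sin (θ - x)|)
    linarith
  · have h2 : (0:ℝ) ≤ _root_.abs (Real.log |Real.sin (θ - x)|) := abs_nonneg _
    linarith

lemma sin_zero_null (x : ℝ) : volume {θ : ℝ | Real.sin (θ - x) = 0} = 0 := by
  have hsub : {θ : ℝ | Real.sin (θ - x) = 0} ⊆ Set.range (fun n : ℤ => x + n * π) := by
    intro θ hθ
    rw [Set.mem_setOf_eq, Real.sin_eq_zero_iff] at hθ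
    obtain ⟨n, hn⟩ := hθ
    exact ⟨n, show x + ↑n * π = θ by linarith⟩
  exact measure_mono_null hsub ((Set.countable_range _).measure_zero _)

end helpers2

/-- The `k`-th Fourier coefficient `ĝ_k = (1/(2π)) ∫_0^{2π} g(θ) e^{-ikθ} dθ`. -/
noncomputable def circleFourierCoeff (g : ℝ → ℂ) (k : ℤ) : ℂ :=
  (1 / (2 * Real.pi)) * ∫ θ in (0 : ℝ)..(2 * Real.pi), g θ * Complex.exp (-Complex.I * k * θ)

open Set Filter in
/-- The Fourier coefficients of `f_x(θ) = log|e^{iθ} - e^{ix}|` are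
`(f_x)^_k = -e^{-ikx}/(2|k|)` for `k ≠ 0`, and `(f_x)^_0 = 0`. -/
theorem fourierCoeff_log_abs_exp_sub (x : ℝ) :
    (∀ k : ℤ, k ≠ 0 →
      circleFourierCoeff
        (fun θ => (Real.log (norm
          (Complex.exp (Complex.I * θ) - Complex.exp (Complex.I * x))) : ℂ)) k
        = -Complex.exp (-Complex.I * k * x) / (2 * ((|k| : ℤ) : ℂ))) ∧
    circleFourierCoeff
      (fun θ => (Real.log (norm
        (Complex.exp (Complex.I * θ) - Complex.exp (Complex.I * x))) : ℂ)) 0 = 0 := by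
  have hπ := Real.pi_pos
  have hle : (0:ℝ) ≤ 2*π := by linarith
  set μ := volume.restrict (Set.Ioc (0:ℝ) (2*π)) with hμ
  -- the main limit computation, for every k
  have main : ∀ k : ℤ,
      (∫ θ in (0:ℝ)..(2*π),
        (Real.log (norm
          (Complex.exp (Complex.I * θ) - Complex.exp (Complex.I * x))) : ℂ)
          * Complex.exp (-Complex.I * k * θ))
      = if k = 0 then 0 else
          -(π:ℂ) * Complex.exp (-Complex.I * k * x) / (k.natAbs : ℂ) := by
    intro k
    set F : ℝ → ℝ → ℂ := fun r θ =>
      ((Real.log (norm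
        (Complex.exp (Complex.I * θ) - r * Complex.exp (Complex.I * x))) : ℝ) : ℂ)
        * Complex.exp (-Complex.I * k * θ) with hF
    have hE : ∀ θ : ℝ, ‖Complex.exp (-Complex.I * k * θ)‖ = 1 := by
      intro θ
      rw [show (-Complex.I * (k:ℂ) * (θ:ℝ)) = ((-((k:ℝ) * θ) : ℝ) : ℂ) * Complex.I by
        push_cast; ring]
      rw [Complex.norm_exp_ofReal_mul_I]
    have hmeas : ∀ r : ℝ, AEStronglyMeasurable (F r) μ := by
      intro r
      apply Measurable.aestronglyMeasurable
      apply Measurable.mul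
      · exact Complex.measurable_ofReal.comp (Real.measurable_log.comp
          (continuous_norm.comp (by fun_prop)).measurable)
      · exact (Complex.continuous_exp.comp (by fun_prop)).measurable
    have hZ : ∀ᵐ θ : ℝ ∂volume, Real.sin (θ - x) ≠ 0 := by
      rw [ae_iff]
      simpa using sin_zero_null x
    have hbound_int : Integrable
        (fun θ => Real.log 2 + _root_.abs (Real.log |Real.sin (θ - x)|)) μ := by
      have h1 := ((intInt_logsin (-x) (2*π - x)).comp_sub_right x).abs
      rw [show -x + x = (0:ℝ) by ring, show 2*π - x + x = 2*π by ring] at h1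
      rw [intervalIntegrable_iff_integrableOn_Ioc_of_le hle] at h1
      exact (MeasureTheory.integrableOn_const measure_Ioc_lt_top.ne).add h1
    have hDCT : Tendsto (fun r : ℝ => ∫ θ, F r θ ∂μ) (nhdsWithin 1 (Set.Iio 1))
        (nhds (∫ θ, F 1 θ ∂μ)) := by
      apply MeasureTheory.tendsto_integral_filter_of_dominated_convergence
        (bound := fun θ => Real.log 2 + _root_.abs (Real.log |Real.sin (θ - x)|))
      · exact Filter.Eventually.of_forall hmeas
      · have hmem : Set.Ico (1/2 : ℝ) 1 ∈ nhdsWithin (1:ℝ) (Set.Iio 1) :=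
          Ico_mem_nhdsLT_of_mem ⟨by norm_num, le_rfl⟩
        filter_upwards [hmem] with r hr
        filter_upwards [ae_restrict_of_ae hZ] with θ hθ
        rw [hF]
        simp only [norm_mul, hE θ, mul_one, Complex.norm_real, Real.norm_eq_abs]
        exact log_bound x r θ hr.1 hr.2.le hθ
      · exact hbound_int
      · apply ae_restrict_of_ae
        filter_upwards [hZ] with θ hθ
        have hA1 : (0:ℝ) < norm
            (Complex.exp (Complex.I * θ) - (1:ℝ) * Complex.exp (Complex.I * x)) :=
          lt_of_lt_of_le (by positivity) (abs_lower x 1 θ (by norm_num))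
        have hc0 : ContinuousAt (fun r : ℝ => norm
            (Complex.exp (Complex.I * θ) - ↑r * Complex.exp (Complex.I * x))) 1 :=
          (continuous_norm.comp (by fun_prop : Continuous fun r : ℝ =>
            Complex.exp (Complex.I * θ) - ↑r * Complex.exp (Complex.I * x))).continuousAt
        have hc1 : ContinuousAt (fun r : ℝ => Real.log (norm
            (Complex.exp (Complex.I * θ) - ↑r * Complex.exp (Complex.I * x)))) 1 :=
          hc0.log hA1.ne'
        have hc : ContinuousAt (fun r : ℝ => F r θ) 1 :=
          ((Complex.continuous_ofReal.continuousAt.comp hc1).mul continuousAt_const)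
        exact hc.tendsto.mono_left nhdsWithin_le_nhds
    -- identify the approximating integrals
    have heq : ∀ᶠ r : ℝ in nhdsWithin 1 (Set.Iio 1),
        (∫ θ, F r θ ∂μ) = if k = 0 then 0 else
          -(π:ℂ) * (r:ℂ) ^ (k.natAbs) * Complex.exp (-Complex.I * k * x) / (k.natAbs : ℂ) := by
      have hmem : Set.Ico (0 : ℝ) 1 ∈ nhdsWithin (1:ℝ) (Set.Iio 1) :=
        Ico_mem_nhdsLT_of_mem ⟨by norm_num, le_rfl⟩
      filter_upwards [hmem] with r hr
      rw [hμ, ← intervalIntegral.integral_of_le hle]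
      exact coeff_r x r hr.1 hr.2 k
    have hT : Tendsto (fun r : ℝ => if k = 0 then (0:ℂ) else
        -(π:ℂ) * (r:ℂ) ^ (k.natAbs) * Complex.exp (-Complex.I * k * x) / (k.natAbs : ℂ))
        (nhdsWithin 1 (Set.Iio 1))
        (nhds (if k = 0 then 0 else
          -(π:ℂ) * Complex.exp (-Complex.I * k * x) / (k.natAbs : ℂ))) := by
      rcases eq_or_ne k 0 with rfl | hk
      · simp only [if_pos rfl]
        exact tendsto_const_nhds
      · simp only [if_neg hk]
        have hc : ContinuousAt (fun r : ℝ =>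
            -(π:ℂ) * (r:ℂ) ^ (k.natAbs) * Complex.exp (-Complex.I * k * x) / (k.natAbs : ℂ))
            1 := by fun_prop
        have h2 : Tendsto (fun r : ℝ =>
            -(π:ℂ) * (r:ℂ) ^ (k.natAbs) * Complex.exp (-Complex.I * k * x) / (k.natAbs : ℂ))
            (nhdsWithin 1 (Set.Iio 1))
            (nhds (-(π:ℂ) * ((1:ℝ):ℂ) ^ (k.natAbs) * Complex.exp (-Complex.I * k * x)
              / (k.natAbs : ℂ))) :=
          hc.tendsto.mono_left nhdsWithin_le_nhds
        simpa using h2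
    have hlim := tendsto_nhds_unique (Filter.Tendsto.congr' heq hDCT) hT
    have hF1 : ∀ θ : ℝ, ((Real.log (norm
        (Complex.exp (Complex.I * θ) - Complex.exp (Complex.I * x))) : ℝ) : ℂ)
          * Complex.exp (-Complex.I * k * θ) = F 1 θ := by
      intro θ
      rw [hF]
      norm_num
    rw [intervalIntegral.integral_of_le hle]
    simp only [hF1]
    exact hlim
  constructor
  · intro k hk
    rw [circleFourierCoeff, main k, if_neg hk]
    have habs : ((|k| : ℤ) : ℂ) = (k.natAbs : ℂ) := by
      rw [Int.abs_eq_natAbs, Int.cast_natCast]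
    rw [habs]
    have hnz : ((k.natAbs : ℕ) : ℂ) ≠ 0 := by
      simp only [ne_eq, Nat.cast_eq_zero]
      omega
    have hπz : ((π:ℝ) : ℂ) ≠ 0 := by
      exact_mod_cast Real.pi_ne_zero
    field_simp
  · rw [circleFourierCoeff, main 0, if_pos rfl, mul_zero]
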